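/- Let V be a finite Gödel set. Then the equivalences Δ∀x A(x) ↔ ∀x ΔA(x) and Δ∃x A(x) ↔ ∃x ΔA(x) are valid in G_V^Δ, all classical quantifier-shift schemas are valid in G_V^Δ, and consequently every sentence of the Δ-extended language has a logically equivalent prenex sentence in G_V^Δ. -/

import Mathlib

namespace GodelPaper

/-- A first-order language: function and relation symbols of each arity. -/
structure Lang where
  Func : ℕ → Type
  Rel : ℕ → Type

/-- A Gödel set: a closed subset of [0,1] containing 0 and 1. -/
def GodelSet (V : Set ℝ) : Prop :=
  IsClosed V ∧ V ⊆ Set.Icc 0 1 ∧ (0:ℝ) ∈ V ∧ (1:ℝ) ∈ V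

/-- Terms with variables from `α`. -/
inductive Term (L : Lang) (α : Type) : Type
  | var : α → Term L α
  | func : ∀ {k}, L.Func k → (Fin k → Term L α) → Term L α

/-- A `V`-interpretation: nonempty domain, interpretation of function symbols,
and truth values in `V` for atomic sentences with parameters. -/
structure Interp (L : Lang) (V : Set ℝ) where
  Dom : Type
  dom_nonempty : Nonempty Dom
  funMap : ∀ {k}, L.Func k → (Fin k → Dom) → Dom
  relVal : ∀ {k}, L.Rel k → (Fin k → Dom) → ℝ
  relVal_mem : ∀ {k} (R : L.Rel k) (v : Fin k → Dom), relVal R v ∈ V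

def Term.eval {L : Lang} {V : Set ℝ} (I : Interp L V) {α : Type} (v : α → I.Dom) :
    Term L α → I.Dom
  | .var i => v i
  | .func f ts => I.funMap f fun j => Term.eval I v (ts j)

/-- Formulas of the Δ-extended language, with free variables among `Fin n`.
The quantifiers bind the *last* variable. Δ-free formulas (i.e. formulas of the
plain language) are singled out by the predicate `DeltaFree` below. -/
inductive Form (L : Lang) : ℕ → Type
  | falsum : ∀ {n}, Form L n
  | atom : ∀ {n k}, L.Rel k → (Fin k → Term L (Fin n)) → Form L n
  | conj : ∀ {n}, Form L n → Form L n → Form L n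
  | disj : ∀ {n}, Form L n → Form L n → Form L n
  | impl : ∀ {n}, Form L n → Form L n → Form L n
  | delta : ∀ {n}, Form L n → Form L n
  | all : ∀ {n}, Form L (n+1) → Form L n
  | ex : ∀ {n}, Form L (n+1) → Form L n

/-- The Gödel truth value of a formula under an interpretation and an
assignment of the free variables. -/
noncomputable def Form.val {L : Lang} {V : Set ℝ} (I : Interp L V) :
    ∀ {n}, Form L n → (Fin n → I.Dom) → ℝ
  | _, .falsum, _ => 0
  | _, .atom R ts, ρ => I.relVal R fun j => Term.eval I ρ (ts j)
  | _, .conj A B, ρ => min (Form.val I A ρ) (Form.val I B ρ)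
  | _, .disj A B, ρ => max (Form.val I A ρ) (Form.val I B ρ)
  | _, .impl A B, ρ => if Form.val I A ρ ≤ Form.val I B ρ then 1 else Form.val I B ρ
  | _, .delta A, ρ => if Form.val I A ρ = 1 then 1 else 0
  | _, .all A, ρ => sInf {v : ℝ | ∃ d : I.Dom, v = Form.val I A (Fin.snoc ρ d)}
  | _, .ex A, ρ => sSup {v : ℝ | ∃ d : I.Dom, v = Form.val I A (Fin.snoc ρ d)}

/-- The value of a sentence. -/
noncomputable def Form.sval {L : Lang} {V : Set ℝ} (I : Interp L V) (A : Form L 0) : ℝ :=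
  Form.val I A Fin.elim0

/-- `A` is valid in `G_V`. -/
def Valid {L : Lang} (V : Set ℝ) (A : Form L 0) : Prop :=
  ∀ I : Interp L V, Form.sval I A = 1

/-- `A` is 1-satisfiable in `G_V`. -/
def OneSat {L : Lang} (V : Set ℝ) (A : Form L 0) : Prop :=
  ∃ I : Interp L V, Form.sval I A = 1

/-- `A` is classically satisfiable: it takes value 1 under a `V`-interpretation
assigning only values in {0,1} to atomic sentences. -/
def ClassSat {L : Lang} (V : Set ℝ) (A : Form L 0) : Prop :=
  ∃ I : Interp L V,
    (∀ {k : ℕ} (R : L.Rel k) (v : Fin k → I.Dom), I.relVal R v = 0 ∨ I.relVal R v = 1) ∧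
    Form.sval I A = 1

/-- ¬A abbreviates A ⊃ ⊥. -/
def Form.not {L : Lang} {n : ℕ} (A : Form L n) : Form L n := Form.impl A Form.falsum

/-- A ↔ B abbreviates (A ⊃ B) ∧ (B ⊃ A). -/
def Form.iff {L : Lang} {n : ℕ} (A B : Form L n) : Form L n :=
  Form.conj (Form.impl A B) (Form.impl B A)

/-- Formulas of the plain language (no Δ). -/
def DeltaFree {L : Lang} : ∀ {n}, Form L n → Prop
  | _, .falsum => True
  | _, .atom _ _ => True
  | _, .conj A B => DeltaFree A ∧ DeltaFree B
  | _, .disj A B => DeltaFree A ∧ DeltaFree B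
  | _, .impl A B => DeltaFree A ∧ DeltaFree B
  | _, .delta _ => False
  | _, .all A => DeltaFree A
  | _, .ex A => DeltaFree A

/-- Quantifier-free formulas. -/
def QuantFree {L : Lang} : ∀ {n}, Form L n → Prop
  | _, .falsum => True
  | _, .atom _ _ => True
  | _, .conj A B => QuantFree A ∧ QuantFree B
  | _, .disj A B => QuantFree A ∧ QuantFree B
  | _, .impl A B => QuantFree A ∧ QuantFree B
  | _, .delta A => QuantFree A
  | _, .all _ => False
  | _, .ex _ => False

/-- Formulas containing no universal quantifier. -/
def AllFree {L : Lang} : ∀ {n}, Form L n → Prop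
  | _, .falsum => True
  | _, .atom _ _ => True
  | _, .conj A B => AllFree A ∧ AllFree B
  | _, .disj A B => AllFree A ∧ AllFree B
  | _, .impl A B => AllFree A ∧ AllFree B
  | _, .delta A => AllFree A
  | _, .all _ => False
  | _, .ex A => AllFree A

/-- Prenex formulas: a block of quantifiers followed by a quantifier-free matrix. -/
inductive IsPrenex {L : Lang} : ∀ {n}, Form L n → Prop
  | qf {n} {A : Form L n} : QuantFree A → IsPrenex A
  | all {n} {A : Form L (n+1)} : IsPrenex A → IsPrenex (Form.all A)
  | ex {n} {A : Form L (n+1)} : IsPrenex A → IsPrenex (Form.ex A)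

/-- Purely existential prenex formulas. -/
inductive ExPrenex {L : Lang} : ∀ {n}, Form L n → Prop
  | qf {n} {A : Form L n} : QuantFree A → ExPrenex A
  | ex {n} {A : Form L (n+1)} : ExPrenex A → ExPrenex (Form.ex A)

/-- The glued interpretation `I_ω`: atoms with value ≤ ω keep their value,
all other atoms get value 1. Same domain and function interpretations. -/
noncomputable def Interp.glue {L : Lang} {V : Set ℝ} (I : Interp L V) (ω : ℝ)
    (h1 : (1:ℝ) ∈ V) : Interp L V where
  Dom := I.Dom
  dom_nonempty := I.dom_nonempty
  funMap := fun {k} f v => I.funMap f v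
  relVal := fun {k} R v => if I.relVal R v ≤ ω then I.relVal R v else 1
  relVal_mem := fun {k} R v => by
    by_cases h : I.relVal R v ≤ ω
    · simpa [h] using I.relVal_mem R v
    · simpa [h] using h1

/-- The Gödel set `V_↑ = {1 - 1/k : k ≥ 1} ∪ {1}`. -/
def Vup : Set ℝ := {x : ℝ | ∃ k : ℕ, 1 ≤ k ∧ x = 1 - 1/(k:ℝ)} ∪ {1}

/-- The `m`-element Gödel set `V_m = {1 - 1/k : 1 ≤ k ≤ m-1} ∪ {1}`. -/
def Vfin (m : ℕ) : Set ℝ :=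
  {x : ℝ | ∃ k : ℕ, 1 ≤ k ∧ k ≤ m - 1 ∧ x = 1 - 1/(k:ℝ)} ∪ {1}

/-- Atomic formula built from a unary predicate. -/
def atom1 {L : Lang} (P : L.Rel 1) {n : ℕ} (t : Term L (Fin n)) : Form L n :=
  Form.atom P fun _ => t

/-- Atomic formula built from a 0-ary predicate (propositional atom). -/
def atom0 {L : Lang} (X : L.Rel 0) {n : ℕ} : Form L n :=
  Form.atom X fun i => i.elim0

def Term.rename {L : Lang} {α β : Type} (f : α → β) : Term L α → Term L β
  | .var i => .var (f i)
  | .func g ts => .func g fun j => Term.rename f (ts j)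

def Form.rename {L : Lang} : ∀ {m n}, (Fin m → Fin n) → Form L m → Form L n
  | _, _, _, .falsum => .falsum
  | _, _, f, .atom R ts => .atom R fun j => (ts j).rename f
  | _, _, f, .conj A B => .conj (A.rename f) (B.rename f)
  | _, _, f, .disj A B => .disj (A.rename f) (B.rename f)
  | _, _, f, .impl A B => .impl (A.rename f) (B.rename f)
  | _, _, f, .delta A => .delta (A.rename f)
  | _, _, f, .all A =>
      .all (A.rename (Fin.lastCases (Fin.last _) fun i => Fin.castSucc (f i)))
  | _, _, f, .ex A =>
      .ex (A.rename (Fin.lastCases (Fin.last _) fun i => Fin.castSucc (f i)))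

/-- Weakening: regard a formula with `n` free variables as one with `n+1`
free variables (not using the new last variable). -/
def Form.lift {L : Lang} {n : ℕ} (A : Form L n) : Form L (n+1) :=
  A.rename Fin.castSucc

def Term.subst {L : Lang} {α β : Type} (σ : α → Term L β) : Term L α → Term L β
  | .var i => σ i
  | .func g ts => .func g fun j => Term.subst σ (ts j)

def Form.subst {L : Lang} : ∀ {m n}, (Fin m → Term L (Fin n)) → Form L m → Form L n
  | _, _, _, .falsum => .falsum
  | _, _, σ, .atom R ts => .atom R fun j => (ts j).subst σ
  | _, _, σ, .conj A B => .conj (A.subst σ) (B.subst σ)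
  | _, _, σ, .disj A B => .disj (A.subst σ) (B.subst σ)
  | _, _, σ, .impl A B => .impl (A.subst σ) (B.subst σ)
  | _, _, σ, .delta A => .delta (A.subst σ)
  | _, _, σ, .all A =>
      .all (A.subst (Fin.lastCases (.var (Fin.last _))
        fun i => (σ i).rename Fin.castSucc))
  | _, _, σ, .ex A =>
      .ex (A.subst (Fin.lastCases (.var (Fin.last _))
        fun i => (σ i).rename Fin.castSucc))

/-- The language `L ∪ {f}` with one new function symbol of arity `a`. -/
def Lang.addFunc (L : Lang) (a : ℕ) : Lang where
  Func := fun k => L.Func k ⊕ PLift (k = a)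
  Rel := L.Rel

/-- The new function symbol of `L.addFunc a`. -/
def newFunc (L : Lang) (a : ℕ) : (L.addFunc a).Func a := Sum.inr ⟨rfl⟩

def Term.emb {L : Lang} {a : ℕ} {α : Type} : Term L α → Term (L.addFunc a) α
  | .var i => .var i
  | .func g ts => .func (Sum.inl g) fun j => Term.emb (ts j)

/-- Embedding of `L`-formulas into the language with the extra function symbol. -/
def Form.emb {L : Lang} {a : ℕ} : ∀ {n}, Form L n → Form (L.addFunc a) n
  | _, .falsum => .falsum
  | _, .atom R ts => .atom R fun j => (ts j).emb
  | _, .conj A B => .conj A.emb B.emb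
  | _, .disj A B => .disj A.emb B.emb
  | _, .impl A B => .impl A.emb B.emb
  | _, .delta A => .delta A.emb
  | _, .all A => .all A.emb
  | _, .ex A => .ex A.emb

/-- Prefix of `n` existential quantifiers (outermost quantifier binds variable 0). -/
def Form.exN {L : Lang} : ∀ n, Form L n → Form L 0
  | 0, A => A
  | n+1, A => Form.exN n (Form.ex A)

/-- Prefix of `n` universal quantifiers (outermost quantifier binds variable 0). -/
def Form.allN {L : Lang} : ∀ n, Form L n → Form L 0
  | 0, A => A
  | n+1, A => Form.allN n (Form.all A)

end GodelPaper

/-!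
Over a finite set of truth values every quantifier is witnessed: `∀x A(x)` and `∃x A(x)` take
the value of some instance `A(d)`. A quantifier therefore commutes with every truth function
that is monotone on `[0,1]`, and turns into the dual quantifier under an antitone one. `min`,
`max`, `Δ` and Gödel implication in its second argument are monotone, Gödel implication in its
first argument is antitone; this gives all the shift laws, and applying them bottom-up moves
every quantifier of a formula to the front.
-/

open Set

section FiniteRange
variable {ι α β : Type*} [Nonempty ι] [ConditionallyCompleteLinearOrder α]
  [ConditionallyCompleteLinearOrder β] {f : ι → α} {φ : α → β}

theorem Set.Finite.exists_eq_ciInf (hf : (range f).Finite) : ∃ i, f i = ⨅ i, f i :=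
  (range_nonempty f).csInf_mem hf

theorem Set.Finite.exists_eq_ciSup (hf : (range f).Finite) : ∃ i, f i = ⨆ i, f i :=
  (range_nonempty f).csSup_mem hf

theorem MonotoneOn.ciInf_comp_of_finite_range (hφ : MonotoneOn φ (range f))
    (hf : (range f).Finite) : ⨅ i, φ (f i) = φ (⨅ i, f i) := by
  obtain ⟨i₀, hi₀⟩ := hf.exists_eq_ciInf
  have hle : ∀ i, φ (f i₀) ≤ φ (f i) := fun i =>
    hφ (mem_range_self i₀) (mem_range_self i) (hi₀ ▸ ciInf_le hf.bddBelow i)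
  rw [← hi₀]
  exact le_antisymm (ciInf_le ⟨_, forall_mem_range.2 hle⟩ i₀) (le_ciInf hle)

theorem MonotoneOn.ciSup_comp_of_finite_range (hφ : MonotoneOn φ (range f))
    (hf : (range f).Finite) : ⨆ i, φ (f i) = φ (⨆ i, f i) :=
  hφ.dual.ciInf_comp_of_finite_range (α := αᵒᵈ) (β := βᵒᵈ) hf

theorem AntitoneOn.ciInf_comp_of_finite_range (hφ : AntitoneOn φ (range f))
    (hf : (range f).Finite) : ⨅ i, φ (f i) = φ (⨆ i, f i) :=
  hφ.dual_left.ciInf_comp_of_finite_range (α := αᵒᵈ) hf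

theorem AntitoneOn.ciSup_comp_of_finite_range (hφ : AntitoneOn φ (range f))
    (hf : (range f).Finite) : ⨆ i, φ (f i) = φ (⨅ i, f i) :=
  hφ.dual_right.ciInf_comp_of_finite_range (β := βᵒᵈ) hf

end FiniteRange

namespace GodelPaper

noncomputable def godelImp (a b : ℝ) : ℝ := if a ≤ b then 1 else b

noncomputable def godelDelta (a : ℝ) : ℝ := if a = 1 then 1 else 0

theorem godelImp_self (a : ℝ) : godelImp a a = 1 := if_pos le_rfl

theorem antitone_godelImp_left {b : ℝ} (hb : b ≤ 1) : Antitone fun a => godelImp a b := by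
  intro a₁ a₂ ha
  simp only [godelImp]
  split_ifs <;> first | rfl | exact hb | linarith

theorem monotoneOn_godelImp_right (a : ℝ) : MonotoneOn (godelImp a) (Iic 1) := by
  intro c₁ hc₁ c₂ _ hc
  simp only [godelImp]
  split_ifs <;> first | rfl | exact hc₁ | exact hc | linarith

theorem monotoneOn_godelDelta : MonotoneOn godelDelta (Iic 1) := by
  intro c₁ _ c₂ hc₂ hc
  simp only [godelDelta]
  split_ifs with h₁ h₂ <;> norm_num
  exact h₂ (le_antisymm hc₂ (h₁ ▸ hc))

section Semantics
variable {L : Lang} {V : Set ℝ}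

instance Interp.instNonemptyDom (I : Interp L V) : Nonempty I.Dom := I.dom_nonempty

variable (I : Interp L V) {n : ℕ}

theorem val_conj (A B : Form L n) (ρ : Fin n → I.Dom) :
    Form.val I (.conj A B) ρ = min (Form.val I A ρ) (Form.val I B ρ) := rfl

theorem val_disj (A B : Form L n) (ρ : Fin n → I.Dom) :
    Form.val I (.disj A B) ρ = max (Form.val I A ρ) (Form.val I B ρ) := rfl

theorem val_impl (A B : Form L n) (ρ : Fin n → I.Dom) :
    Form.val I (.impl A B) ρ = godelImp (Form.val I A ρ) (Form.val I B ρ) := rfl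

theorem val_delta (A : Form L n) (ρ : Fin n → I.Dom) :
    Form.val I (.delta A) ρ = godelDelta (Form.val I A ρ) := rfl

theorem val_all (A : Form L (n + 1)) (ρ : Fin n → I.Dom) :
    Form.val I (.all A) ρ = ⨅ d, Form.val I A (Fin.snoc ρ d) := by
  simp only [Form.val, iInf, range, eq_comm]

theorem val_ex (A : Form L (n + 1)) (ρ : Fin n → I.Dom) :
    Form.val I (.ex A) ρ = ⨆ d, Form.val I A (Fin.snoc ρ d) := by
  simp only [Form.val, iSup, range, eq_comm]

theorem Term.eval_rename {α β : Type} (f : α → β) (t : Term L α) (v : β → I.Dom) :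
    Term.eval I v (t.rename f) = Term.eval I (v ∘ f) t := by
  induction t with
  | var i => rfl
  | func g ts ih => simp only [Term.rename, Term.eval, ih]

theorem snoc_comp_lastCases {m : ℕ} {D : Type} (ρ : Fin n → D) (d : D) (f : Fin m → Fin n) :
    (Fin.snoc ρ d : Fin (n + 1) → D) ∘ (Fin.lastCases (Fin.last n) fun i => (f i).castSucc) =
      Fin.snoc (ρ ∘ f) d := by
  funext i
  refine Fin.lastCases ?_ (fun i => ?_) i <;> simp

theorem val_rename {m : ℕ} (A : Form L m) (f : Fin m → Fin n) (ρ : Fin n → I.Dom) :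
    Form.val I (A.rename f) ρ = Form.val I A (ρ ∘ f) := by
  induction A generalizing n with
  | falsum => rfl
  | atom R ts => simp only [Form.rename, Form.val, Term.eval_rename]
  | conj A B ihA ihB | disj A B ihA ihB | impl A B ihA ihB =>
      simp only [Form.rename, Form.val, ihA, ihB]
  | delta A ih => simp only [Form.rename, Form.val, ih]
  | all A ih => simp only [Form.rename, val_all, ih, snoc_comp_lastCases]
  | ex A ih => simp only [Form.rename, val_ex, ih, snoc_comp_lastCases]

theorem val_lift (B : Form L n) (ρ : Fin n → I.Dom) (d : I.Dom) :
    Form.val I B.lift (Fin.snoc ρ d) = Form.val I B ρ := by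
  rw [Form.lift, val_rename]
  congr 1
  funext i
  simp

end Semantics

section FiniteGodelSet
variable {L : Lang} {V : Set ℝ} (hV : GodelSet V) (hfin : V.Finite) (I : Interp L V) {n : ℕ}
include hV hfin

theorem val_mem (A : Form L n) (ρ : Fin n → I.Dom) : Form.val I A ρ ∈ V := by
  induction A with
  | falsum => exact hV.2.2.1
  | atom => exact I.relVal_mem _ _
  | conj A B ihA ihB => rw [val_conj, min_def]; split; exacts [ihA ρ, ihB ρ]
  | disj A B ihA ihB => rw [val_disj, max_def]; split; exacts [ihB ρ, ihA ρ]
  | impl A B ihA ihB => rw [val_impl, godelImp]; split; exacts [hV.2.2.2, ihB ρ]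
  | delta A ih => rw [val_delta, godelDelta]; split; exacts [hV.2.2.2, hV.2.2.1]
  | all A ih =>
      obtain ⟨d, hd⟩ :=
        (hfin.subset (range_subset_iff.2 fun d => ih (Fin.snoc ρ d))).exists_eq_ciInf
      exact val_all I A ρ ▸ hd ▸ ih _
  | ex A ih =>
      obtain ⟨d, hd⟩ :=
        (hfin.subset (range_subset_iff.2 fun d => ih (Fin.snoc ρ d))).exists_eq_ciSup
      exact val_ex I A ρ ▸ hd ▸ ih _

theorem val_le_one (A : Form L n) (ρ : Fin n → I.Dom) : Form.val I A ρ ≤ 1 :=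
  (hV.2.1 (val_mem hV hfin I A ρ)).2

theorem finite_range_val (A : Form L (n + 1)) (ρ : Fin n → I.Dom) :
    (range fun d => Form.val I A (Fin.snoc ρ d)).Finite :=
  hfin.subset (range_subset_iff.2 fun _ => val_mem hV hfin I A _)

theorem range_val_subset_Iic (A : Form L (n + 1)) (ρ : Fin n → I.Dom) :
    (range fun d => Form.val I A (Fin.snoc ρ d)) ⊆ Iic 1 :=
  range_subset_iff.2 fun _ => val_le_one hV hfin I A _

variable {A C : Form L (n + 1)} {ρ : Fin n → I.Dom} (φ : ℝ → ℝ)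

theorem val_all_of_monotoneOn (hφ : MonotoneOn φ (Iic 1))
    (hC : ∀ d, Form.val I C (Fin.snoc ρ d) = φ (Form.val I A (Fin.snoc ρ d))) :
    Form.val I (.all C) ρ = φ (Form.val I (.all A) ρ) := by
  simp only [val_all, hC]
  exact (hφ.mono (range_val_subset_Iic hV hfin I A ρ)).ciInf_comp_of_finite_range
    (finite_range_val hV hfin I A ρ)

theorem val_ex_of_monotoneOn (hφ : MonotoneOn φ (Iic 1))
    (hC : ∀ d, Form.val I C (Fin.snoc ρ d) = φ (Form.val I A (Fin.snoc ρ d))) :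
    Form.val I (.ex C) ρ = φ (Form.val I (.ex A) ρ) := by
  simp only [val_ex, hC]
  exact (hφ.mono (range_val_subset_Iic hV hfin I A ρ)).ciSup_comp_of_finite_range
    (finite_range_val hV hfin I A ρ)

theorem val_all_of_antitone (hφ : Antitone φ)
    (hC : ∀ d, Form.val I C (Fin.snoc ρ d) = φ (Form.val I A (Fin.snoc ρ d))) :
    Form.val I (.all C) ρ = φ (Form.val I (.ex A) ρ) := by
  simp only [val_all, val_ex, hC]
  exact (hφ.antitoneOn _).ciInf_comp_of_finite_range (finite_range_val hV hfin I A ρ)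

theorem val_ex_of_antitone (hφ : Antitone φ)
    (hC : ∀ d, Form.val I C (Fin.snoc ρ d) = φ (Form.val I A (Fin.snoc ρ d))) :
    Form.val I (.ex C) ρ = φ (Form.val I (.all A) ρ) := by
  simp only [val_all, val_ex, hC]
  exact (hφ.antitoneOn _).ciSup_comp_of_finite_range (finite_range_val hV hfin I A ρ)

end FiniteGodelSet

section LogEquiv
variable {L : Lang} {V : Set ℝ} {n : ℕ}

def LogEquiv (V : Set ℝ) (A B : Form L n) : Prop :=
  ∀ (I : Interp L V) (ρ : Fin n → I.Dom), Form.val I A ρ = Form.val I B ρ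

theorem LogEquiv.symm {A B : Form L n} (h : LogEquiv V A B) : LogEquiv V B A :=
  fun I ρ => (h I ρ).symm

theorem LogEquiv.trans {A B C : Form L n} (h₁ : LogEquiv V A B) (h₂ : LogEquiv V B C) :
    LogEquiv V A C :=
  fun I ρ => (h₁ I ρ).trans (h₂ I ρ)

theorem LogEquiv.all {A B : Form L (n + 1)} (h : LogEquiv V A B) :
    LogEquiv V (.all A) (.all B) := fun I ρ => by simp only [val_all, h I]

theorem LogEquiv.ex {A B : Form L (n + 1)} (h : LogEquiv V A B) :
    LogEquiv V (.ex A) (.ex B) := fun I ρ => by simp only [val_ex, h I]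

theorem LogEquiv.valid_iff {A B : Form L 0} (h : LogEquiv V A B) : Valid V (A.iff B) := by
  intro I
  simp only [Form.sval, Form.iff, val_conj, val_impl, h I, godelImp_self, min_self]

end LogEquiv

section ShiftLaws
variable {L : Lang} {V : Set ℝ} (hV : GodelSet V) (hfin : V.Finite) {n : ℕ}
  (A : Form L (n + 1)) (B : Form L n)
include hV hfin

theorem logEquiv_delta_all : LogEquiv V (.delta (.all A)) (.all (.delta A)) := fun I _ =>
  (val_all_of_monotoneOn hV hfin I _ monotoneOn_godelDelta fun _ => rfl).symm

theorem logEquiv_delta_ex : LogEquiv V (.delta (.ex A)) (.ex (.delta A)) := fun I _ =>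
  (val_ex_of_monotoneOn hV hfin I _ monotoneOn_godelDelta fun _ => rfl).symm

theorem logEquiv_all_conj : LogEquiv V (.all (.conj A B.lift)) (.conj (.all A) B) := fun I ρ =>
  val_all_of_monotoneOn hV hfin I (min · (Form.val I B ρ))
    ((monotone_id.min monotone_const).monotoneOn _) fun d => by rw [val_conj, val_lift]

theorem logEquiv_ex_conj : LogEquiv V (.ex (.conj A B.lift)) (.conj (.ex A) B) := fun I ρ =>
  val_ex_of_monotoneOn hV hfin I (min · (Form.val I B ρ))
    ((monotone_id.min monotone_const).monotoneOn _) fun d => by rw [val_conj, val_lift]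

theorem logEquiv_all_disj : LogEquiv V (.all (.disj A B.lift)) (.disj (.all A) B) := fun I ρ =>
  val_all_of_monotoneOn hV hfin I (max · (Form.val I B ρ))
    ((monotone_id.max monotone_const).monotoneOn _) fun d => by rw [val_disj, val_lift]

theorem logEquiv_ex_disj : LogEquiv V (.ex (.disj A B.lift)) (.disj (.ex A) B) := fun I ρ =>
  val_ex_of_monotoneOn hV hfin I (max · (Form.val I B ρ))
    ((monotone_id.max monotone_const).monotoneOn _) fun d => by rw [val_disj, val_lift]

theorem logEquiv_all_impl : LogEquiv V (.all (.impl A B.lift)) (.impl (.ex A) B) := fun I ρ =>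
  val_all_of_antitone hV hfin I (godelImp · (Form.val I B ρ))
    (antitone_godelImp_left (val_le_one hV hfin I B ρ)) fun d => by rw [val_impl, val_lift]

theorem logEquiv_ex_impl : LogEquiv V (.ex (.impl A B.lift)) (.impl (.all A) B) := fun I ρ =>
  val_ex_of_antitone hV hfin I (godelImp · (Form.val I B ρ))
    (antitone_godelImp_left (val_le_one hV hfin I B ρ)) fun d => by rw [val_impl, val_lift]

theorem logEquiv_all_impl' : LogEquiv V (.all (.impl B.lift A)) (.impl B (.all A)) := fun I ρ =>
  val_all_of_monotoneOn hV hfin I (godelImp (Form.val I B ρ))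
    (monotoneOn_godelImp_right _) fun d => by rw [val_impl, val_lift]

theorem logEquiv_ex_impl' : LogEquiv V (.ex (.impl B.lift A)) (.impl B (.ex A)) := fun I ρ =>
  val_ex_of_monotoneOn hV hfin I (godelImp (Form.val I B ρ))
    (monotoneOn_godelImp_right _) fun d => by rw [val_impl, val_lift]

theorem logEquiv_all_conj' : LogEquiv V (.all (.conj B.lift A)) (.conj B (.all A)) := fun I ρ =>
  val_all_of_monotoneOn hV hfin I (min (Form.val I B ρ))
    ((monotone_const.min monotone_id).monotoneOn _) fun d => by rw [val_conj, val_lift]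

theorem logEquiv_ex_conj' : LogEquiv V (.ex (.conj B.lift A)) (.conj B (.ex A)) := fun I ρ =>
  val_ex_of_monotoneOn hV hfin I (min (Form.val I B ρ))
    ((monotone_const.min monotone_id).monotoneOn _) fun d => by rw [val_conj, val_lift]

theorem logEquiv_all_disj' : LogEquiv V (.all (.disj B.lift A)) (.disj B (.all A)) := fun I ρ =>
  val_all_of_monotoneOn hV hfin I (max (Form.val I B ρ))
    ((monotone_const.max monotone_id).monotoneOn _) fun d => by rw [val_disj, val_lift]

theorem logEquiv_ex_disj' : LogEquiv V (.ex (.disj B.lift A)) (.disj B (.ex A)) := fun I ρ =>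
  val_ex_of_monotoneOn hV hfin I (max (Form.val I B ρ))
    ((monotone_const.max monotone_id).monotoneOn _) fun d => by rw [val_disj, val_lift]

end ShiftLaws

section Prenex
variable {L : Lang} {V : Set ℝ} {n : ℕ}

theorem QuantFree.rename {m : ℕ} {A : Form L m} (h : QuantFree A) (f : Fin m → Fin n) :
    QuantFree (A.rename f) := by
  induction A generalizing n with
  | falsum | atom => trivial
  | conj A B ihA ihB | disj A B ihA ihB | impl A B ihA ihB => exact ⟨ihA h.1 f, ihB h.2 f⟩
  | delta A ih => exact ih h f
  | all | ex => exact h.elim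

theorem IsPrenex.rename {m : ℕ} {A : Form L m} (h : IsPrenex A) (f : Fin m → Fin n) :
    IsPrenex (A.rename f) := by
  induction h generalizing n with
  | qf hA => exact .qf (hA.rename f)
  | all _ ih => exact .all (ih _)
  | ex _ ih => exact .ex (ih _)

def HasPrenexForm (V : Set ℝ) (A : Form L n) : Prop :=
  ∃ P, IsPrenex P ∧ LogEquiv V A P

theorem IsPrenex.hasPrenexForm {A : Form L n} (h : IsPrenex A) : HasPrenexForm V A :=
  ⟨A, h, fun _ _ => rfl⟩

theorem HasPrenexForm.of_logEquiv {A B : Form L n} (hB : HasPrenexForm V B)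
    (h : LogEquiv V A B) : HasPrenexForm V A :=
  let ⟨P, hP, hBP⟩ := hB
  ⟨P, hP, h.trans hBP⟩

theorem HasPrenexForm.all {A : Form L (n + 1)} (h : HasPrenexForm V A) :
    HasPrenexForm V (.all A) :=
  let ⟨P, hP, hAP⟩ := h
  ⟨.all P, .all hP, hAP.all⟩

theorem HasPrenexForm.ex {A : Form L (n + 1)} (h : HasPrenexForm V A) :
    HasPrenexForm V (.ex A) :=
  let ⟨P, hP, hAP⟩ := h
  ⟨.ex P, .ex hP, hAP.ex⟩

theorem IsPrenex.hasPrenexForm_op (op : ∀ {n : ℕ}, Form L n → Form L n → Form L n)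
    (quantFree_op : ∀ {n} {A B : Form L n}, QuantFree A → QuantFree B → QuantFree (op A B))
    (all_left : ∀ {n} (A : Form L (n + 1)) (B : Form L n),
      HasPrenexForm V (op A B.lift) → HasPrenexForm V (op (.all A) B))
    (ex_left : ∀ {n} (A : Form L (n + 1)) (B : Form L n),
      HasPrenexForm V (op A B.lift) → HasPrenexForm V (op (.ex A) B))
    (all_right : ∀ {n} (A : Form L (n + 1)) (B : Form L n),
      HasPrenexForm V (op B.lift A) → HasPrenexForm V (op B (.all A)))
    (ex_right : ∀ {n} (A : Form L (n + 1)) (B : Form L n),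
      HasPrenexForm V (op B.lift A) → HasPrenexForm V (op B (.ex A)))
    {P : Form L n} (hP : IsPrenex P) {Q : Form L n} (hQ : IsPrenex Q) :
    HasPrenexForm V (op P Q) := by
  induction hP with
  | qf hP =>
      induction hQ with
      | qf hQ => exact (IsPrenex.qf (quantFree_op hP hQ)).hasPrenexForm
      | all _ ih => exact all_right _ _ (ih (hP.rename _))
      | ex _ ih => exact ex_right _ _ (ih (hP.rename _))
  | all _ ih => exact all_left _ _ (ih (hQ.rename _))
  | ex _ ih => exact ex_left _ _ (ih (hQ.rename _))

variable (hV : GodelSet V) (hfin : V.Finite)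
include hV hfin

theorem HasPrenexForm.conj {A B : Form L n} (hA : HasPrenexForm V A) (hB : HasPrenexForm V B) :
    HasPrenexForm V (.conj A B) := by
  obtain ⟨P, hP, hAP⟩ := hA
  obtain ⟨Q, hQ, hBQ⟩ := hB
  refine (hP.hasPrenexForm_op (@Form.conj L) (fun hA hB => ⟨hA, hB⟩)
    (fun A B h => h.all.of_logEquiv (logEquiv_all_conj hV hfin A B).symm)
    (fun A B h => h.ex.of_logEquiv (logEquiv_ex_conj hV hfin A B).symm)
    (fun A B h => h.all.of_logEquiv (logEquiv_all_conj' hV hfin A B).symm)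
    (fun A B h => h.ex.of_logEquiv (logEquiv_ex_conj' hV hfin A B).symm) hQ).of_logEquiv ?_
  exact fun I ρ => by simp only [val_conj, hAP I ρ, hBQ I ρ]

theorem HasPrenexForm.disj {A B : Form L n} (hA : HasPrenexForm V A) (hB : HasPrenexForm V B) :
    HasPrenexForm V (.disj A B) := by
  obtain ⟨P, hP, hAP⟩ := hA
  obtain ⟨Q, hQ, hBQ⟩ := hB
  refine (hP.hasPrenexForm_op (@Form.disj L) (fun hA hB => ⟨hA, hB⟩)
    (fun A B h => h.all.of_logEquiv (logEquiv_all_disj hV hfin A B).symm)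
    (fun A B h => h.ex.of_logEquiv (logEquiv_ex_disj hV hfin A B).symm)
    (fun A B h => h.all.of_logEquiv (logEquiv_all_disj' hV hfin A B).symm)
    (fun A B h => h.ex.of_logEquiv (logEquiv_ex_disj' hV hfin A B).symm) hQ).of_logEquiv ?_
  exact fun I ρ => by simp only [val_disj, hAP I ρ, hBQ I ρ]

theorem HasPrenexForm.impl {A B : Form L n} (hA : HasPrenexForm V A) (hB : HasPrenexForm V B) :
    HasPrenexForm V (.impl A B) := by
  obtain ⟨P, hP, hAP⟩ := hA
  obtain ⟨Q, hQ, hBQ⟩ := hB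
  refine (hP.hasPrenexForm_op (@Form.impl L) (fun hA hB => ⟨hA, hB⟩)
    (fun A B h => h.ex.of_logEquiv (logEquiv_ex_impl hV hfin A B).symm)
    (fun A B h => h.all.of_logEquiv (logEquiv_all_impl hV hfin A B).symm)
    (fun A B h => h.all.of_logEquiv (logEquiv_all_impl' hV hfin A B).symm)
    (fun A B h => h.ex.of_logEquiv (logEquiv_ex_impl' hV hfin A B).symm) hQ).of_logEquiv ?_
  exact fun I ρ => by simp only [val_impl, hAP I ρ, hBQ I ρ]

theorem IsPrenex.hasPrenexForm_delta {P : Form L n} (hP : IsPrenex P) :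
    HasPrenexForm V (.delta P) := by
  induction hP with
  | qf hP => exact IsPrenex.hasPrenexForm (.qf hP)
  | all _ ih => exact ih.all.of_logEquiv (logEquiv_delta_all hV hfin _)
  | ex _ ih => exact ih.ex.of_logEquiv (logEquiv_delta_ex hV hfin _)

theorem HasPrenexForm.delta {A : Form L n} (hA : HasPrenexForm V A) :
    HasPrenexForm V (.delta A) :=
  let ⟨_, hP, hAP⟩ := hA
  (hP.hasPrenexForm_delta hV hfin).of_logEquiv fun I ρ => by simp only [val_delta, hAP I ρ]

theorem hasPrenexForm (A : Form L n) : HasPrenexForm V A := by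
  induction A with
  | falsum | atom => exact IsPrenex.hasPrenexForm (.qf trivial)
  | conj _ _ ihA ihB => exact ihA.conj hV hfin ihB
  | disj _ _ ihA ihB => exact ihA.disj hV hfin ihB
  | impl _ _ ihA ihB => exact ihA.impl hV hfin ihB
  | delta _ ih => exact ih.delta hV hfin
  | all _ ih => exact ih.all
  | ex _ ih => exact ih.ex

end Prenex

/-- For a finite Gödel set `V`: the equivalences
`Δ∀x A(x) ↔ ∀x ΔA(x)` and `Δ∃x A(x) ↔ ∃x ΔA(x)` are valid in `G_V^Δ`, all
classical quantifier-shift schemas are valid in `G_V^Δ`, and consequently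
every sentence of the Δ-extended language has a logically equivalent prenex
sentence in `G_V^Δ`. -/
theorem stmt_14 {L : Lang} {V : Set ℝ} (hV : GodelSet V) (hfin : V.Finite) :
    (∀ A : Form L 1,
      Valid V (Form.iff (Form.delta (Form.all A)) (Form.all (Form.delta A))) ∧
      Valid V (Form.iff (Form.delta (Form.ex A)) (Form.ex (Form.delta A)))) ∧
    (∀ (A : Form L 1) (B : Form L 0),
      Valid V (Form.iff (Form.all (Form.conj A (Form.lift B)))
        (Form.conj (Form.all A) B)) ∧
      Valid V (Form.iff (Form.ex (Form.conj A (Form.lift B)))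
        (Form.conj (Form.ex A) B)) ∧
      Valid V (Form.iff (Form.all (Form.disj A (Form.lift B)))
        (Form.disj (Form.all A) B)) ∧
      Valid V (Form.iff (Form.ex (Form.disj A (Form.lift B)))
        (Form.disj (Form.ex A) B)) ∧
      Valid V (Form.iff (Form.all (Form.impl A (Form.lift B)))
        (Form.impl (Form.ex A) B)) ∧
      Valid V (Form.iff (Form.ex (Form.impl A (Form.lift B)))
        (Form.impl (Form.all A) B)) ∧
      Valid V (Form.iff (Form.all (Form.impl (Form.lift B) A))
        (Form.impl B (Form.all A))) ∧
      Valid V (Form.iff (Form.ex (Form.impl (Form.lift B) A))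
        (Form.impl B (Form.ex A)))) ∧
    (∀ C : Form L 0, ∃ P : Form L 0, IsPrenex P ∧
      ∀ I : Interp L V, Form.sval I C = Form.sval I P) := by
  refine ⟨fun A => ⟨(logEquiv_delta_all hV hfin A).valid_iff,
      (logEquiv_delta_ex hV hfin A).valid_iff⟩,
    fun A B => ⟨(logEquiv_all_conj hV hfin A B).valid_iff,
      (logEquiv_ex_conj hV hfin A B).valid_iff,
      (logEquiv_all_disj hV hfin A B).valid_iff,
      (logEquiv_ex_disj hV hfin A B).valid_iff,
      (logEquiv_all_impl hV hfin A B).valid_iff,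
      (logEquiv_ex_impl hV hfin A B).valid_iff,
      (logEquiv_all_impl' hV hfin A B).valid_iff,
      (logEquiv_ex_impl' hV hfin A B).valid_iff⟩,
    fun C => ?_⟩
  obtain ⟨P, hP, hCP⟩ := hasPrenexForm hV hfin C
  exact ⟨P, hP, fun I => hCP I Fin.elim0⟩

end GodelPaper
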